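/- arXiv:2009.01024 — 2 statements merged into one kernel-verified Lean document; each statement's English description precedes it below -/
import Mathlib

section
/- For every n ≥ 1, the number of connected nonnesting matchings of [2n] equals the Catalan number C_{n-1}. -/
/-- A (perfect) matching on `Fin m`: a fixed-point-free involution. -/
def IsMatching {m : ℕ} (f : Fin m → Fin m) : Prop :=
  Function.Involutive f ∧ ∀ i, f i ≠ i

/-- The pattern `σ` occurs in `τ`. -/
def Occurs {m M : ℕ} (σ : Fin m → Fin m) (τ : Fin M → Fin M) : Prop :=
  ∃ g : Fin m → Fin M, StrictMono g ∧ ∀ p, τ (g p) = g (σ p)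

def Avoids {m M : ℕ} (σ : Fin m → Fin m) (τ : Fin M → Fin M) : Prop :=
  ¬ Occurs σ τ

def juxt {m M : ℕ} (σ : Fin m → Fin m) (τ : Fin M → Fin M) :
    Fin (m + M) → Fin (m + M) :=
  fun i => finSumFinEquiv (Sum.map σ τ (finSumFinEquiv.symm i))

def liftMatching {m : ℕ} (σ : Fin m → Fin m) : Fin (m + 2) → Fin (m + 2) := fun i =>
  if _ : i.val = 0 then ⟨m + 1, by omega⟩
  else if _ : i.val = m + 1 then ⟨0, by omega⟩
  else ⟨(σ ⟨i.val - 1, by have := i.isLt; omega⟩).val + 1, by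
    have := (σ ⟨i.val - 1, by have := i.isLt; omega⟩).isLt; omega⟩

/-- `τ` contains `σ`, but deleting the rightmost edge of `τ` (the edge containing the
last vertex) destroys every occurrence of `σ`. -/
def MinContains {m M : ℕ} (σ : Fin m → Fin m) (τ : Fin M → Fin M) : Prop :=
  Occurs σ τ ∧ ¬ ∃ g : Fin m → Fin M, StrictMono g ∧ (∀ p, τ (g p) = g (σ p)) ∧
    ∀ p, (g p : ℕ) ≠ M - 1 ∧ (τ (g p) : ℕ) ≠ M - 1

def ConnectedMatching {m : ℕ} (f : Fin m → Fin m) : Prop :=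
  0 < m ∧ ¬ ∃ h : ℕ, 0 < h ∧ h < m ∧ ∀ i : Fin m, ((i : ℕ) < h ↔ ((f i : ℕ) < h))

def HasCrossing {m : ℕ} (f : Fin m → Fin m) : Prop :=
  ∃ a b : Fin m, a < b ∧ b < f a ∧ f a < f b

def p1122 : Fin 4 → Fin 4 := ![1, 0, 3, 2]
def p1212 : Fin 4 → Fin 4 := ![2, 3, 0, 1]
def p1221 : Fin 4 → Fin 4 := ![3, 2, 1, 0]

/-!
Record a matching `f` by its set of openers `{i | i < f i}` as a word in `U`, `D`. Below any
threshold `f` injects closers into openers, so the word is a Dyck word. A nonnesting matching pairs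
the `j`-th opener with the `j`-th closer, so it is determined by its word, and conversely every Dyck
word arises from the matching that pairs its `j`-th `U` with its `j`-th `D`. The matching splits
at `h` exactly when the word returns to height `0` after `h` letters, so connected nonnesting
matchings of `[2n]` correspond to Dyck words `U w D` with `w` of semilength `n - 1`.
-/

open Finset DyckStep

lemma Finset.exists_orderEmbOfFin_eq {α : Type*} [LinearOrder α] {k : ℕ} (s : Finset α)
    (hs : #s = k) {a : α} (ha : a ∈ s) : ∃ j, s.orderEmbOfFin hs j = a := by
  rwa [← Set.mem_range, range_orderEmbOfFin]

lemma List.count_take_ofFn {m : ℕ} {α : Type*} [DecidableEq α] (g : Fin m → α) (x : α) (h : ℕ) :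
    ((List.ofFn g).take h).count x = #{i : Fin m | i.val < h ∧ g i = x} := by
  induction h with
  | zero => simp
  | succ i ih =>
    by_cases hi : i < m
    · have hsplit : ({j | j.val < i + 1 ∧ g j = x} : Finset (Fin m)) =
          ({j | j.val < i ∧ g j = x} : Finset (Fin m)) ∪
            (if g ⟨i, hi⟩ = x then {⟨i, hi⟩} else ∅) := by
        ext j
        split_ifs <;> simp [Fin.ext_iff] <;> grind
      rw [List.take_add_one, List.count_append, ih, List.getElem?_ofFn, hsplit,
        card_union_of_disjoint (by split_ifs <;> simp)]
      split_ifs <;> simp_all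
    · have hlen : (List.ofFn g).length ≤ i := by simp; omega
      rw [List.take_of_length_le (hlen.trans (Nat.le_succ i)), ← List.take_of_length_le hlen, ih]
      refine congrArg card (Finset.filter_congr fun j _ => and_congr_left' ?_)
      have := j.isLt
      omega

variable {m : ℕ}

def prefixCard (S : Finset (Fin m)) (h : ℕ) : ℕ := #{x ∈ S | x.val < h}

lemma prefixCard_of_le (S : Finset (Fin m)) {h : ℕ} (hh : m ≤ h) : prefixCard S h = #S := by
  rw [prefixCard, filter_true_of_mem fun x _ => by omega]

lemma lt_prefixCard_iff {k : ℕ} (S : Finset (Fin m)) (hS : #S = k) (j : Fin k) (h : ℕ) :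
    (j : ℕ) < prefixCard S h ↔ (S.orderEmbOfFin hS j : ℕ) < h := by
  set e := S.orderEmbOfFin hS
  constructor
  · intro hj
    by_contra! hle
    have hsub : {x ∈ S | x.val < h} ⊆ (Iio j).map e.toEmbedding := by
      intro x hx
      obtain ⟨hxS, hxh⟩ := mem_filter.1 hx
      obtain ⟨j', rfl⟩ : x ∈ Set.range e := by rwa [S.range_orderEmbOfFin]
      exact mem_map_of_mem _ (mem_Iio.2 (e.lt_iff_lt.1 (Fin.lt_def.2 (by omega))))
    have := card_le_card hsub
    simp only [card_map, Fin.card_Iio] at this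
    exact this.not_gt hj
  · intro hj
    have hsub : (Iic j).map e.toEmbedding ⊆ {x ∈ S | x.val < h} := by
      intro x hx
      obtain ⟨j', hj', rfl⟩ := mem_map.1 hx
      exact mem_filter.2 ⟨S.orderEmbOfFin_mem hS j',
        lt_of_le_of_lt (Fin.le_def.1 (e.le_iff_le.2 (mem_Iic.1 hj'))) hj⟩
    have := card_le_card hsub
    simp only [card_map, Fin.card_Iic] at this
    exact this

def stepWord (S : Finset (Fin m)) : List DyckStep :=
  List.ofFn fun i => if i ∈ S then U else D

@[simp] lemma length_stepWord (S : Finset (Fin m)) : (stepWord S).length = m := by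
  simp [stepWord]

lemma count_U_take_stepWord (S : Finset (Fin m)) (h : ℕ) :
    ((stepWord S).take h).count U = prefixCard S h := by
  rw [stepWord, List.count_take_ofFn, prefixCard]
  congr 1
  ext i
  by_cases hi : i ∈ S <;> simp [hi]

lemma count_D_take_stepWord (S : Finset (Fin m)) (h : ℕ) :
    ((stepWord S).take h).count D = prefixCard Sᶜ h := by
  rw [stepWord, List.count_take_ofFn, prefixCard]
  congr 1
  ext i
  by_cases hi : i ∈ S <;> simp [hi]

lemma stepWord_injective : Function.Injective (stepWord : Finset (Fin m) → List DyckStep) := by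
  intro S T h
  ext i
  have hi := congrFun (List.ofFn_injective h) i
  by_cases hS : i ∈ S <;> by_cases hT : i ∈ T <;> simp_all

def openers (f : Fin m → Fin m) : Finset (Fin m) := {i | i < f i}

lemma mem_openers {f : Fin m → Fin m} {i : Fin m} : i ∈ openers f ↔ i < f i := by
  simp [openers]

namespace IsMatching

variable {f : Fin m → Fin m}

lemma mem_compl_openers (hf : IsMatching f) {i : Fin m} : i ∈ (openers f)ᶜ ↔ f i < i := by
  rw [mem_compl, mem_openers, not_lt, le_iff_lt_or_eq, or_iff_left (hf.2 i)]

lemma apply_mem_openers_iff (hf : IsMatching f) {i : Fin m} :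
    f i ∈ openers f ↔ i ∈ (openers f)ᶜ := by
  rw [hf.mem_compl_openers, mem_openers, hf.1 i]

lemma card_compl_openers (hf : IsMatching f) : #(openers f)ᶜ = #(openers f) := by
  rw [← card_image_of_injective (openers f) hf.1.injective]
  refine congrArg card (ext fun i => ?_)
  rw [mem_image]
  constructor
  · intro hi
    exact ⟨f i, hf.apply_mem_openers_iff.2 hi, hf.1 i⟩
  · rintro ⟨j, hj, rfl⟩
    exact hf.apply_mem_openers_iff.1 (by rwa [hf.1 j])

lemma mapsTo_closers_openers (hf : IsMatching f) (h : ℕ) :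
    Set.MapsTo f (({x ∈ (openers f)ᶜ | x.val < h} : Finset (Fin m)) : Set (Fin m))
      ({x ∈ openers f | x.val < h} : Finset (Fin m)) := by
  intro i hi
  rw [mem_coe, mem_filter] at hi ⊢
  exact ⟨hf.apply_mem_openers_iff.2 hi.1,
    lt_trans (Fin.lt_def.1 (hf.mem_compl_openers.1 hi.1)) hi.2⟩

lemma prefixCard_compl_openers_le (hf : IsMatching f) (h : ℕ) :
    prefixCard (openers f)ᶜ h ≤ prefixCard (openers f) h :=
  card_le_card_of_injOn f (hf.mapsTo_closers_openers h) hf.1.injective.injOn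

lemma splits_iff (hf : IsMatching f) (h : ℕ) :
    (∀ i : Fin m, (i : ℕ) < h ↔ (f i : ℕ) < h) ↔
      prefixCard (openers f)ᶜ h = prefixCard (openers f) h := by
  constructor
  · intro hsplit
    refine le_antisymm (hf.prefixCard_compl_openers_le h)
      (card_le_card_of_injOn f (fun i hi => ?_) hf.1.injective.injOn)
    rw [mem_coe, mem_filter] at hi ⊢
    exact ⟨hf.apply_mem_openers_iff.1 (by rw [hf.1 i]; exact hi.1), (hsplit i).1 hi.2⟩
  · intro hcard
    have himage : {x ∈ (openers f)ᶜ | x.val < h}.image f = {x ∈ openers f | x.val < h} :=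
      eq_of_subset_of_card_le (fun i hi => by
          obtain ⟨j, hj, rfl⟩ := mem_image.1 hi
          exact hf.mapsTo_closers_openers h hj)
        (by rw [card_image_of_injective _ hf.1.injective]; exact hcard.ge)
    have hlt : ∀ i : Fin m, (i : ℕ) < h → (f i : ℕ) < h := by
      intro i hi
      by_cases hiS : i ∈ openers f
      · obtain ⟨j, hj, rfl⟩ := mem_image.1 (himage ▸ mem_filter.2 ⟨hiS, hi⟩)
        rw [hf.1 j]
        exact (mem_filter.1 hj).2
      · exact lt_trans (hf.mem_compl_openers.1 (mem_compl.2 hiS)) hi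
    exact fun i => ⟨hlt i, fun hfi => hf.1 i ▸ hlt (f i) hfi⟩

lemma avoids_p1221_iff (hf : IsMatching f) :
    Avoids p1221 f ↔ StrictMonoOn f (openers f : Set (Fin m)) := by
  constructor
  · intro hav i hi i' hi' hlt
    rw [mem_coe, mem_openers] at hi hi'
    by_contra hge
    have hlt' : f i' < f i :=
      lt_of_le_of_ne (not_lt.1 hge) fun h => hlt.ne (hf.1.injective h.symm)
    have hg : StrictMono ![i, i', f i', f i] :=
      Fin.strictMono_iff_lt_succ.2 fun p => by fin_cases p <;> simpa
    exact hav ⟨_, hg, fun p => by fin_cases p <;> simp [p1221, hf.1 _]⟩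
  · rintro hmono ⟨g, hg, hocc⟩
    have h0 : f (g 0) = g 3 := hocc 0
    have h1 : f (g 1) = g 2 := hocc 1
    have hnest : f (g 1) < f (g 0) := by
      rw [h0, h1]
      exact hg (by decide)
    refine hnest.not_gt (hmono ?_ ?_ (hg (by decide)))
    · rw [mem_coe, mem_openers, h0]
      exact hg (by decide)
    · rw [mem_coe, mem_openers, h1]
      exact hg (by decide)

end IsMatching

section MatchByRank

variable (S : Finset (Fin m)) (hS : #Sᶜ = #S)

def matchByRank : Fin m → Fin m := fun i =>
  if h : i ∈ S then Sᶜ.orderEmbOfFin hS ((S.orderIsoOfFin rfl).symm ⟨i, h⟩)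
  else S.orderEmbOfFin rfl ((Sᶜ.orderIsoOfFin hS).symm ⟨i, mem_compl.2 h⟩)

lemma matchByRank_orderEmbOfFin (j : Fin #S) :
    matchByRank S hS (S.orderEmbOfFin rfl j) = Sᶜ.orderEmbOfFin hS j := by
  rw [matchByRank, dif_pos (S.orderEmbOfFin_mem rfl j)]
  congr
  rw [OrderIso.symm_apply_eq]
  exact Subtype.ext (S.coe_orderIsoOfFin_apply rfl j).symm

lemma matchByRank_orderEmbOfFin_compl (j : Fin #S) :
    matchByRank S hS (Sᶜ.orderEmbOfFin hS j) = S.orderEmbOfFin rfl j := by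
  rw [matchByRank, dif_neg (mem_compl.1 (Sᶜ.orderEmbOfFin_mem hS j))]
  congr
  rw [OrderIso.symm_apply_eq]
  exact Subtype.ext (Sᶜ.coe_orderIsoOfFin_apply hS j).symm

lemma isMatching_matchByRank : IsMatching (matchByRank S hS) := by
  refine ⟨fun i => ?_, fun i => ?_⟩ <;> by_cases hi : i ∈ S
  · obtain ⟨j, rfl⟩ := S.exists_orderEmbOfFin_eq rfl hi
    rw [matchByRank_orderEmbOfFin, matchByRank_orderEmbOfFin_compl]
  · obtain ⟨j, rfl⟩ := Sᶜ.exists_orderEmbOfFin_eq hS (mem_compl.2 hi)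
    rw [matchByRank_orderEmbOfFin_compl, matchByRank_orderEmbOfFin]
  · obtain ⟨j, rfl⟩ := S.exists_orderEmbOfFin_eq rfl hi
    rw [matchByRank_orderEmbOfFin]
    exact fun h => mem_compl.1 (h ▸ Sᶜ.orderEmbOfFin_mem hS j) hi
  · obtain ⟨j, rfl⟩ := Sᶜ.exists_orderEmbOfFin_eq hS (mem_compl.2 hi)
    rw [matchByRank_orderEmbOfFin_compl]
    exact fun h => hi (h ▸ S.orderEmbOfFin_mem rfl j)

variable {S}

/-- At or below the `j`-th element of `Sᶜ` lie `j + 1` elements of `Sᶜ`, hence of `S`. -/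
lemma orderEmbOfFin_lt_orderEmbOfFin_compl (hdom : ∀ h, prefixCard Sᶜ h ≤ prefixCard S h)
    (j : Fin #S) :
    S.orderEmbOfFin rfl j < Sᶜ.orderEmbOfFin hS j := by
  have hle : (S.orderEmbOfFin rfl j : ℕ) < Sᶜ.orderEmbOfFin hS j + 1 :=
    (lt_prefixCard_iff S rfl j _).1
      ((lt_prefixCard_iff Sᶜ hS j _).2 (Nat.lt_succ_self _) |>.trans_le (hdom _))
  have hne : S.orderEmbOfFin rfl j ≠ Sᶜ.orderEmbOfFin hS j := fun h =>
    mem_compl.1 (Sᶜ.orderEmbOfFin_mem hS j) (h ▸ S.orderEmbOfFin_mem rfl j)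
  exact lt_of_le_of_ne (Fin.le_def.2 (Nat.lt_succ_iff.1 hle)) hne

lemma openers_matchByRank (hdom : ∀ h, prefixCard Sᶜ h ≤ prefixCard S h) :
    openers (matchByRank S hS) = S := by
  ext i
  rw [mem_openers]
  by_cases hi : i ∈ S
  · obtain ⟨j, rfl⟩ := S.exists_orderEmbOfFin_eq rfl hi
    rw [matchByRank_orderEmbOfFin]
    exact iff_of_true (orderEmbOfFin_lt_orderEmbOfFin_compl hS hdom j) hi
  · obtain ⟨j, rfl⟩ := Sᶜ.exists_orderEmbOfFin_eq hS (mem_compl.2 hi)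
    rw [matchByRank_orderEmbOfFin_compl]
    exact iff_of_false (orderEmbOfFin_lt_orderEmbOfFin_compl hS hdom j).not_gt hi

lemma avoids_matchByRank (hdom : ∀ h, prefixCard Sᶜ h ≤ prefixCard S h) :
    Avoids p1221 (matchByRank S hS) := by
  rw [(isMatching_matchByRank S hS).avoids_p1221_iff, openers_matchByRank hS hdom]
  intro i hi i' hi' hlt
  obtain ⟨j, rfl⟩ := S.exists_orderEmbOfFin_eq rfl hi
  obtain ⟨j', rfl⟩ := S.exists_orderEmbOfFin_eq rfl hi'
  rw [matchByRank_orderEmbOfFin, matchByRank_orderEmbOfFin]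
  exact (Sᶜ.orderEmbOfFin hS).strictMono ((S.orderEmbOfFin rfl).lt_iff_lt.1 hlt)

end MatchByRank

lemma IsMatching.eq_matchByRank {f : Fin m → Fin m} (hf : IsMatching f) (hav : Avoids p1221 f) :
    f = matchByRank (openers f) hf.card_compl_openers := by
  set S := openers f
  have hfS : (fun j => f (S.orderEmbOfFin rfl j)) = Sᶜ.orderEmbOfFin hf.card_compl_openers :=
    orderEmbOfFin_unique _ (fun j => hf.apply_mem_openers_iff.1 (by
        rw [hf.1]; exact S.orderEmbOfFin_mem rfl j))
      fun a b hab => hf.avoids_p1221_iff.1 hav (S.orderEmbOfFin_mem rfl a)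
        (S.orderEmbOfFin_mem rfl b) ((S.orderEmbOfFin rfl).strictMono hab)
  funext i
  by_cases hi : i ∈ S
  · obtain ⟨j, rfl⟩ := S.exists_orderEmbOfFin_eq rfl hi
    rw [matchByRank_orderEmbOfFin]
    exact congrFun hfS j
  · obtain ⟨j, rfl⟩ := Sᶜ.exists_orderEmbOfFin_eq hf.card_compl_openers (mem_compl.2 hi)
    rw [matchByRank_orderEmbOfFin_compl, ← congrFun hfS j, hf.1]

namespace IsMatching

variable {f : Fin m → Fin m}

def dyckWord (hf : IsMatching f) : DyckWord where
  toList := stepWord (openers f)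
  count_U_eq_count_D := by
    have hU := count_U_take_stepWord (openers f) m
    have hD := count_D_take_stepWord (openers f) m
    rw [List.take_of_length_le (length_stepWord _).le] at hU hD
    rw [hU, hD, prefixCard_of_le _ le_rfl, prefixCard_of_le _ le_rfl, hf.card_compl_openers]
  count_D_le_count_U i := by
    rw [count_U_take_stepWord, count_D_take_stepWord]
    exact hf.prefixCard_compl_openers_le i

lemma two_mul_semilength_dyckWord (hf : IsMatching f) : 2 * hf.dyckWord.semilength = m := by
  rw [DyckWord.two_mul_semilength_eq_length]
  exact length_stepWord _

lemma isNested_dyckWord_iff (hf : IsMatching f) :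
    hf.dyckWord.IsNested ↔ ConnectedMatching f := by
  simp only [DyckWord.IsNested, ConnectedMatching, ← DyckWord.toList_ne_nil, dyckWord,
    ne_eq, ← List.length_eq_zero_iff, length_stepWord, count_U_take_stepWord,
    count_D_take_stepWord, hf.splits_iff, not_exists, not_and,
    (hf.prefixCard_compl_openers_le _).lt_iff_ne, Nat.pos_iff_ne_zero]

lemma eq_of_dyckWord_eq {g : Fin m → Fin m} (hf : IsMatching f) (hg : IsMatching g)
    (hfa : Avoids p1221 f) (hga : Avoids p1221 g) (h : hf.dyckWord = hg.dyckWord) : f = g := by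
  have hS : openers f = openers g := stepWord_injective (congrArg DyckWord.toList h)
  rw [hf.eq_matchByRank hfa, hg.eq_matchByRank hga]
  congr 1

end IsMatching

lemma exists_isMatching_dyckWord_eq (p : DyckWord) (hp : p.toList.length = m) :
    ∃ (f : Fin m → Fin m) (hf : IsMatching f), Avoids p1221 f ∧ hf.dyckWord = p := by
  set S : Finset (Fin m) := {i | p.toList[i.val]? = some U}
  have hword : stepWord S = p.toList := by
    refine List.ext_getElem (by simp [hp]) fun i _ hi => ?_
    simp only [stepWord, List.getElem_ofFn, S, mem_filter, mem_univ, true_and,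
      List.getElem?_eq_getElem hi]
    rcases p.toList[i].dichotomy with h | h <;> simp [h]
  have hU (h : ℕ) : prefixCard S h = (p.toList.take h).count U := by
    rw [← hword, count_U_take_stepWord]
  have hD (h : ℕ) : prefixCard Sᶜ h = (p.toList.take h).count D := by
    rw [← hword, count_D_take_stepWord]
  have hS : #Sᶜ = #S := by
    rw [← prefixCard_of_le S le_rfl, ← prefixCard_of_le Sᶜ le_rfl, hU, hD,
      List.take_of_length_le hp.le, p.count_U_eq_count_D]
  have hdom (h : ℕ) : prefixCard Sᶜ h ≤ prefixCard S h := by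
    rw [hU, hD]
    exact p.count_D_le_count_U h
  refine ⟨matchByRank S hS, isMatching_matchByRank S hS, avoids_matchByRank hS hdom,
    DyckWord.ext ?_⟩
  change stepWord (openers (matchByRank S hS)) = p.toList
  rw [openers_matchByRank hS hdom, hword]

noncomputable def connectedNonnestingEquiv (n : ℕ) :
    {f : Fin (2 * n) → Fin (2 * n) // IsMatching f ∧ Avoids p1221 f ∧ ConnectedMatching f} ≃
      {p : DyckWord // p.IsNested ∧ p.semilength = n} :=
  Equiv.ofBijective
    (fun f => ⟨f.2.1.dyckWord, f.2.1.isNested_dyckWord_iff.2 f.2.2.2,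
      by have := f.2.1.two_mul_semilength_dyckWord; omega⟩)
    ⟨fun f g hfg => Subtype.ext
        (f.2.1.eq_of_dyckWord_eq g.2.1 f.2.2.1 g.2.2.1 (congrArg Subtype.val hfg)),
      fun ⟨p, hnest, hp⟩ => by
        obtain ⟨f, hf, hav, rfl⟩ := exists_isMatching_dyckWord_eq p
          (by rw [← p.two_mul_semilength_eq_length, hp])
        exact ⟨⟨f, hf, hav, hf.isNested_dyckWord_iff.1 hnest⟩, rfl⟩⟩

def DyckWord.nestEquiv (n : ℕ) :
    {p : DyckWord // p.semilength = n} ≃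
      {p : DyckWord // p.IsNested ∧ p.semilength = n + 1} where
  toFun p := ⟨p.1.nest, .nest, by rw [DyckWord.semilength_nest, p.2]⟩
  invFun p := ⟨p.1.denest p.2.1, by
    have h := congrArg DyckWord.semilength (p.1.nest_denest p.2.1)
    rw [DyckWord.semilength_nest] at h
    exact Nat.succ_injective (h.trans p.2.2)⟩
  left_inv p := Subtype.ext p.1.denest_nest
  right_inv p := Subtype.ext (p.1.nest_denest p.2.1)

theorem card_connected_nonnesting (n : ℕ) (hn : 1 ≤ n) :
    Nat.card {f : Fin (2 * n) → Fin (2 * n) //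
        IsMatching f ∧ Avoids p1221 f ∧ ConnectedMatching f} =
      catalan (n - 1) := by
  obtain ⟨k, rfl⟩ : ∃ k, n = k + 1 := ⟨n - 1, by omega⟩
  rw [Nat.card_congr ((connectedNonnestingEquiv (k + 1)).trans (DyckWord.nestEquiv k).symm),
    Nat.card_eq_fintype_card, DyckWord.card_dyckWord_semilength_eq_catalan, Nat.add_sub_cancel]
end

section
/- For n ≥ 2, the number of matchings of [2n] minimally containing the pattern 1212 equals binom(2n-1, n-2). -/
/-!
Deleting the rightmost arc `{k, 2n}` of a matching that minimally contains `1212` leaves a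
noncrossing matching `g` of `[2n - 2]`, and every crossing of the original matching uses the
deleted arc. Conversely, inserting an arc from a gap `k` of a noncrossing matching `g` of `[2m]` to
a new last point gives a matching all of whose crossings use the new arc; it has a crossing unless
no arc of `g` passes over the gap `k`. So the `(2m + 1) C_m` pairs `(k, g)` split into the minimal
`1212`-matchings of `[2m + 2]` and the `C_{m + 1}` noncrossing matchings of `[2m + 2]`, and
`(2m + 1) C_m - C_{m + 1} = binom(2m + 1, m - 1)`.

The same insertion gives the Catalan recursion for noncrossing matchings: a noncrossing `g` in which
no arc passes over the gap `k` is the juxtaposition of noncrossing matchings of its first `k` and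
its last `2m - k` points.
-/

open Function

variable {M N : ℕ}

def Crosses (f : Fin N → Fin N) (a b : Fin N) : Prop :=
  a < b ∧ b < f a ∧ f a < f b

abbrev NoncrossingMatching (N : ℕ) := {f : Fin N → Fin N // IsMatching f ∧ ¬ HasCrossing f}

section Semiconj

variable {e : Fin M → Fin N} {g : Fin M → Fin M} {f : Fin N → Fin N}

lemma IsMatching.of_semiconj (he : Injective e) (h : Semiconj e g f) (hf : IsMatching f) :
    IsMatching g :=
  ⟨fun x => he (by rw [h.eq, h.eq, hf.1]), fun x hx => hf.2 (e x) (by rw [← h.eq, hx])⟩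

lemma crosses_semiconj_iff (he : StrictMono e) (h : Semiconj e g f) {x y : Fin M} :
    Crosses f (e x) (e y) ↔ Crosses g x y := by
  simp only [Crosses, ← h.eq, he.lt_iff_lt]

lemma HasCrossing.of_semiconj (he : StrictMono e) (h : Semiconj e g f) :
    HasCrossing g → HasCrossing f
  | ⟨x, y, hxy⟩ => ⟨e x, e y, (crosses_semiconj_iff he h).2 hxy⟩

end Semiconj

section Pattern

variable {f : Fin N → Fin N}

lemma occurrence_p1212_iff (hf : Involutive f) {g : Fin 4 → Fin N} :
    (StrictMono g ∧ ∀ p, f (g p) = g (p1212 p)) ↔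
      Crosses f (g 0) (g 1) ∧ g 2 = f (g 0) ∧ g 3 = f (g 1) := by
  constructor
  · rintro ⟨hg, hfg⟩
    have h2 : g 2 = f (g 0) := (hfg 0).symm
    have h3 : g 3 = f (g 1) := (hfg 1).symm
    refine ⟨?_, h2, h3⟩
    rw [Crosses, ← h2, ← h3]
    exact ⟨hg (by decide), hg (by decide), hg (by decide)⟩
  · rintro ⟨⟨h01, h12, h23⟩, h2, h3⟩
    rw [← h2] at h12 h23
    rw [← h3] at h23
    refine ⟨Fin.strictMono_iff_lt_succ.2 fun i => ?_, fun p => ?_⟩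
    · fin_cases i
      exacts [h01, h12, h23]
    · fin_cases p
      exacts [h2.symm, h3.symm, show f (g 2) = g 0 by rw [h2, hf],
        show f (g 3) = g 1 by rw [h3, hf]]

lemma occurs_p1212_iff (hf : Involutive f) : Occurs p1212 f ↔ HasCrossing f := by
  constructor
  · rintro ⟨g, hg⟩
    exact ⟨g 0, g 1, ((occurrence_p1212_iff hf).1 hg).1⟩
  · rintro ⟨a, b, hab⟩
    exact ⟨![a, b, f a, f b], (occurrence_p1212_iff hf).2 ⟨hab, rfl, rfl⟩⟩

def CrossingsAtLast (f : Fin (N + 1) → Fin (N + 1)) : Prop :=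
  ∀ a b, Crosses f a b → f b = Fin.last N

abbrev CrossingsAtLastMatching (N : ℕ) :=
  {f : Fin (N + 1) → Fin (N + 1) // IsMatching f ∧ CrossingsAtLast f}

lemma minContains_p1212_iff {f : Fin (N + 1) → Fin (N + 1)} (hf : Involutive f) :
    MinContains p1212 f ↔ HasCrossing f ∧ CrossingsAtLast f := by
  rw [MinContains, occurs_p1212_iff hf, Nat.add_sub_cancel]
  refine and_congr_right fun _ => ⟨fun h a b hab => ?_, ?_⟩
  · by_contra hb
    set g : Fin 4 → Fin (N + 1) := ![a, b, f a, f b]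
    obtain ⟨hmono, hsemi⟩ := (occurrence_p1212_iff hf (g := g)).2 ⟨hab, rfl, rfl⟩
    have below_last (q : Fin 4) : (g q : ℕ) ≠ N :=
      Fin.val_ne_iff.2 ((hmono.monotone (Fin.le_last q)).trans_lt (Fin.lt_last_iff_ne_last.2 hb)).ne
    exact h ⟨g, hmono, hsemi, fun p => ⟨below_last p, hsemi p ▸ below_last _⟩⟩
  · rintro h ⟨g, hg, hsemi, havoid⟩
    obtain ⟨hcr, -, h3⟩ := (occurrence_p1212_iff hf).1 ⟨hg, hsemi⟩
    exact (havoid 3).1 (by rw [h3, h _ _ hcr, Fin.val_last])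

end Pattern

section InsertArc

variable {g : Fin M → Fin M} {k : Fin (M + 1)}

def insertArc (g : Fin M → Fin M) (k : Fin (M + 1)) : Fin (M + 2) → Fin (M + 2) :=
  Fin.snoc (Fin.insertNth k (Fin.last (M + 1)) (Fin.castSucc ∘ k.succAbove ∘ g)) k.castSucc

@[simp] lemma insertArc_last : insertArc g k (Fin.last _) = k.castSucc :=
  Fin.snoc_last _ _

@[simp] lemma insertArc_castSucc_self : insertArc g k k.castSucc = Fin.last _ := by
  simp [insertArc]

lemma semiconj_insertArc : Semiconj (Fin.castSucc ∘ k.succAbove) g (insertArc g k) := fun x => by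
  simp [insertArc]

lemma strictMono_castSucc_succAbove (k : Fin (M + 1)) :
    StrictMono (Fin.castSucc ∘ k.succAbove : Fin M → Fin (M + 2)) :=
  Fin.strictMono_castSucc.comp (Fin.strictMono_succAbove k)

lemma eq_last_or_eq_castSucc_or_eq_castSucc_succAbove (k : Fin (M + 1)) (j : Fin (M + 2)) :
    j = Fin.last _ ∨ j = k.castSucc ∨ ∃ x, j = (Fin.castSucc ∘ k.succAbove) x := by
  obtain ⟨i, rfl⟩ | rfl := Fin.eq_castSucc_or_eq_last j
  · obtain rfl | ⟨x, rfl⟩ := Fin.eq_self_or_eq_succAbove k i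
    exacts [Or.inr (Or.inl rfl), Or.inr (Or.inr ⟨x, rfl⟩)]
  · exact Or.inl rfl

lemma IsMatching.insertArc (hg : IsMatching g) : IsMatching (insertArc g k) := by
  constructor
  · intro j
    obtain rfl | rfl | ⟨x, rfl⟩ := eq_last_or_eq_castSucc_or_eq_castSucc_succAbove k j
    · simp
    · simp
    · rw [← semiconj_insertArc.eq, ← semiconj_insertArc.eq, hg.1]
  · intro j
    obtain rfl | rfl | ⟨x, rfl⟩ := eq_last_or_eq_castSucc_or_eq_castSucc_succAbove k j
    · simp
    · simpa using (Fin.castSucc_lt_last k).ne'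
    · rw [← semiconj_insertArc.eq]
      exact (strictMono_castSucc_succAbove k).injective.ne (hg.2 x)

lemma crosses_insertArc (hg : ¬ HasCrossing g) {a b : Fin (M + 2)}
    (hab : Crosses (insertArc g k) a b) : b = k.castSucc := by
  have he := strictMono_castSucc_succAbove k
  obtain ⟨h1, h2, h3⟩ := id hab
  obtain rfl | rfl | ⟨y, rfl⟩ := eq_last_or_eq_castSucc_or_eq_castSucc_succAbove k b
  · exact absurd h2 (Fin.le_last _).not_gt
  · rfl
  obtain rfl | rfl | ⟨x, rfl⟩ := eq_last_or_eq_castSucc_or_eq_castSucc_succAbove k a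
  · exact absurd h1 (Fin.le_last _).not_gt
  · rw [insertArc_castSucc_self] at h3
    exact absurd h3 (Fin.le_last _).not_gt
  · exact absurd ⟨x, y, (crosses_semiconj_iff he semiconj_insertArc).1 hab⟩ hg

lemma crosses_insertArc_castSucc_iff {x : Fin M} :
    Crosses (insertArc g k) ((Fin.castSucc ∘ k.succAbove) x) k.castSucc ↔
      (x : ℕ) < k ∧ (k : ℕ) ≤ g x := by
  rw [Crosses, ← semiconj_insertArc.eq, insertArc_castSucc_self]
  simp only [comp_apply, Fin.castSucc_lt_castSucc_iff, Fin.succAbove_lt_iff_castSucc_lt,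
    Fin.lt_succAbove_iff_le_castSucc, Fin.castSucc_lt_last, and_true]
  simp only [Fin.lt_def, Fin.le_def, Fin.val_castSucc]

def SplitsAt (f : Fin N → Fin N) (k : ℕ) : Prop :=
  ∀ x : Fin N, (x : ℕ) < k → (f x : ℕ) < k

lemma not_hasCrossing_insertArc_iff (hg : ¬ HasCrossing g) :
    ¬ HasCrossing (insertArc g k) ↔ SplitsAt g k := by
  refine not_iff_comm.1 (Iff.symm ?_)
  simp only [SplitsAt, not_forall, not_lt, exists_prop]
  constructor
  · rintro ⟨a, b, hab⟩
    obtain rfl := crosses_insertArc hg hab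
    obtain rfl | rfl | ⟨x, rfl⟩ := eq_last_or_eq_castSucc_or_eq_castSucc_succAbove k a
    · exact absurd hab.1 (Fin.le_last _).not_gt
    · exact absurd hab.1 (lt_irrefl _)
    · exact ⟨x, crosses_insertArc_castSucc_iff.1 hab⟩
  · rintro ⟨x, hx⟩
    exact ⟨_, _, crosses_insertArc_castSucc_iff.2 hx⟩

lemma insertArc_inj {g' : Fin M → Fin M} {k' : Fin (M + 1)} :
    insertArc g k = insertArc g' k' ↔ g = g' ∧ k = k' := by
  refine ⟨fun h => ?_, by rintro ⟨rfl, rfl⟩; rfl⟩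
  obtain rfl : k = k' := Fin.castSucc_injective _ (by simpa using congrFun h (Fin.last _))
  refine ⟨funext fun x => (strictMono_castSucc_succAbove k).injective ?_, rfl⟩
  simpa only [← semiconj_insertArc.eq] using congrFun h ((Fin.castSucc ∘ k.succAbove) x)

lemma exists_insertArc_eq {f : Fin (M + 2) → Fin (M + 2)} (hf : IsMatching f)
    (hlast : CrossingsAtLast f) :
    ∃ k g, IsMatching g ∧ ¬ HasCrossing g ∧ insertArc g k = f := by
  set k := (f (Fin.last _)).castPred (hf.2 _)
  have hk : f (Fin.last _) = k.castSucc := (Fin.castSucc_castPred _ _).symm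
  have hfk : f k.castSucc = Fin.last _ := by rw [← hk, hf.1]
  set e : Fin M → Fin (M + 2) := Fin.castSucc ∘ k.succAbove
  have he : StrictMono e := strictMono_castSucc_succAbove k
  have maps_to (x : Fin M) : ∃ y, e y = f (e x) := by
    have hx : f (f (e x)) = e x := hf.1 _
    obtain h | h | h := eq_last_or_eq_castSucc_or_eq_castSucc_succAbove k (f (e x))
    · rw [h, hk] at hx
      exact absurd (Fin.castSucc_injective _ hx).symm (k.succAbove_ne x)
    · rw [h, hfk] at hx
      exact absurd hx.symm (Fin.castSucc_lt_last _).ne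
    · exact h.imp fun _ => Eq.symm
  choose g hg using maps_to
  refine ⟨k, g, hf.of_semiconj he.injective hg, fun ⟨x, y, hxy⟩ => ?_, funext fun j => ?_⟩
  · have hy := hlast _ _ ((crosses_semiconj_iff he hg).2 hxy)
    rw [← hg] at hy
    exact (Fin.castSucc_lt_last _).ne hy
  · obtain rfl | rfl | ⟨x, rfl⟩ := eq_last_or_eq_castSucc_or_eq_castSucc_succAbove k j
    · rw [insertArc_last, hk]
    · rw [insertArc_castSucc_self, hfk]
    · rw [← semiconj_insertArc.eq]
      exact hg x

end InsertArc

noncomputable def insertArcEquiv (M : ℕ) :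
    Fin (M + 1) × NoncrossingMatching M ≃ CrossingsAtLastMatching (M + 1) :=
  Equiv.ofBijective
    (fun p => ⟨insertArc p.2.1 p.1, p.2.2.1.insertArc, fun _ _ hab => by
      rw [crosses_insertArc p.2.2.2 hab, insertArc_castSucc_self]⟩)
    ⟨fun p q h => by
      obtain ⟨hg, hk⟩ := insertArc_inj.1 (congrArg Subtype.val h)
      exact Prod.ext hk (Subtype.ext hg),
    fun ⟨f, hf, hlast⟩ => by
      obtain ⟨k, g, hg, hgc, rfl⟩ := exists_insertArc_eq hf hlast
      exact ⟨(k, ⟨g, hg, hgc⟩), rfl⟩⟩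

def noncrossingMatchingEquiv (N : ℕ) :
    NoncrossingMatching (N + 1) ≃ {f : CrossingsAtLastMatching N // ¬ HasCrossing f.1} := by
  refine (Equiv.subtypeEquivRight fun f => ?_).trans
    (Equiv.subtypeSubtypeEquivSubtypeInter (fun f => IsMatching f ∧ CrossingsAtLast f)
      (¬ HasCrossing ·)).symm
  exact ⟨fun hf => ⟨⟨hf.1, fun a b hab => absurd ⟨a, b, hab⟩ hf.2⟩, hf.2⟩,
    fun hf => ⟨hf.1.1, hf.2⟩⟩

theorem card_minContains_add_card_noncrossingMatching (M : ℕ) :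
    Nat.card {f : Fin (M + 2) → Fin (M + 2) // IsMatching f ∧ MinContains p1212 f} +
      Nat.card (NoncrossingMatching (M + 2)) = (M + 1) * Nat.card (NoncrossingMatching M) := by
  classical
  have hmin : {f : Fin (M + 2) → Fin (M + 2) // IsMatching f ∧ MinContains p1212 f} ≃
      {f : CrossingsAtLastMatching (M + 1) // HasCrossing f.1} :=
    (Equiv.subtypeEquivRight fun f => (and_congr_right fun hf =>
      (minContains_p1212_iff hf.1).trans and_comm).trans and_assoc.symm).trans
      (Equiv.subtypeSubtypeEquivSubtypeInter (fun f => IsMatching f ∧ CrossingsAtLast f)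
        HasCrossing).symm
  rw [Nat.card_congr hmin, Nat.card_congr (noncrossingMatchingEquiv (M + 1)), ← Nat.card_sum,
    Nat.card_congr (Equiv.sumCompl _), ← Nat.card_congr (insertArcEquiv M), Nat.card_prod,
    Nat.card_eq_fintype_card, Fintype.card_fin]

section Juxt

variable {k l : ℕ} {σ : Fin k → Fin k} {τ : Fin l → Fin l}

lemma Fin.eq_castAdd_or_eq_natAdd (j : Fin (k + l)) :
    (∃ x, j = Fin.castAdd l x) ∨ ∃ y, j = Fin.natAdd k y := by
  induction j using Fin.addCases with
  | left x => exact Or.inl ⟨x, rfl⟩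
  | right y => exact Or.inr ⟨y, rfl⟩

lemma Fin.castAdd_lt_natAdd (x : Fin k) (y : Fin l) : Fin.castAdd l x < Fin.natAdd k y := by
  rw [Fin.lt_def, Fin.val_castAdd, Fin.val_natAdd]
  omega

lemma semiconj_castAdd_juxt : Semiconj (Fin.castAdd l) σ (juxt σ τ) := fun x => by
  simp [juxt]

lemma semiconj_natAdd_juxt : Semiconj (Fin.natAdd k) τ (juxt σ τ) := fun y => by
  simp [juxt]

lemma IsMatching.juxt (hσ : IsMatching σ) (hτ : IsMatching τ) : IsMatching (juxt σ τ) := by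
  constructor
  · intro j
    induction j using Fin.addCases with
    | left x => rw [← semiconj_castAdd_juxt.eq, ← semiconj_castAdd_juxt.eq, hσ.1]
    | right y => rw [← semiconj_natAdd_juxt.eq, ← semiconj_natAdd_juxt.eq, hτ.1]
  · intro j
    induction j using Fin.addCases with
    | left x =>
      rw [← semiconj_castAdd_juxt.eq]
      exact (Fin.castAdd_injective k l).ne (hσ.2 x)
    | right y =>
      rw [← semiconj_natAdd_juxt.eq]
      exact (Fin.natAdd_injective l k).ne (hτ.2 y)

lemma not_hasCrossing_juxt (hσ : ¬ HasCrossing σ) (hτ : ¬ HasCrossing τ) :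
    ¬ HasCrossing (juxt σ τ) := by
  rintro ⟨a, b, hab⟩
  induction a using Fin.addCases with
  | left x =>
    induction b using Fin.addCases with
    | left y =>
      exact hσ ⟨x, y,
        (crosses_semiconj_iff (Fin.strictMono_castAdd l) semiconj_castAdd_juxt).1 hab⟩
    | right y =>
      rw [← semiconj_castAdd_juxt.eq] at hab
      exact absurd hab.2.1 (Fin.castAdd_lt_natAdd _ _).not_gt
  | right x =>
    induction b using Fin.addCases with
    | left y => exact absurd hab.1 (Fin.castAdd_lt_natAdd _ _).not_gt
    | right y =>
      exact hτ ⟨x, y,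
        (crosses_semiconj_iff (Fin.strictMono_natAdd k) semiconj_natAdd_juxt).1 hab⟩

lemma splitsAt_juxt : SplitsAt (juxt σ τ) k := by
  intro j hj
  induction j using Fin.addCases with
  | left x => simp [← semiconj_castAdd_juxt.eq]
  | right y => simp at hj

lemma exists_juxt_eq {f : Fin (k + l) → Fin (k + l)} (hf : IsMatching f)
    (hfk : SplitsAt f k) :
    ∃ σ τ, Semiconj (Fin.castAdd l) σ f ∧ Semiconj (Fin.natAdd k) τ f ∧
      juxt σ τ = f := by
  have left (x : Fin k) : ∃ x', Fin.castAdd l x' = f (Fin.castAdd l x) := by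
    obtain ⟨x', h⟩ | ⟨y, h⟩ := Fin.eq_castAdd_or_eq_natAdd (f (Fin.castAdd l x))
    · exact ⟨x', h.symm⟩
    · have := hfk (Fin.castAdd l x) (by simp)
      simp [h] at this
  have right (y : Fin l) : ∃ y', Fin.natAdd k y' = f (Fin.natAdd k y) := by
    obtain ⟨x, h⟩ | ⟨y', h⟩ := Fin.eq_castAdd_or_eq_natAdd (f (Fin.natAdd k y))
    · have := hfk (f (Fin.natAdd k y)) (by simp [h])
      simp [hf.1 _] at this
    · exact ⟨y', h.symm⟩
  choose σ hσ using left
  choose τ hτ using right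
  refine ⟨σ, τ, hσ, hτ, funext fun j => ?_⟩
  induction j using Fin.addCases with
  | left x => rw [← semiconj_castAdd_juxt.eq, hσ]
  | right y => rw [← semiconj_natAdd_juxt.eq, hτ]

lemma juxt_inj {σ' : Fin k → Fin k} {τ' : Fin l → Fin l} :
    juxt σ τ = juxt σ' τ' ↔ σ = σ' ∧ τ = τ' := by
  refine ⟨fun h => ⟨funext fun x => Fin.castAdd_injective k l ?_,
    funext fun y => Fin.natAdd_injective l k ?_⟩, by rintro ⟨rfl, rfl⟩; rfl⟩
  · simpa only [← semiconj_castAdd_juxt.eq] using congrFun h (Fin.castAdd l x)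
  · simpa only [← semiconj_natAdd_juxt.eq] using congrFun h (Fin.natAdd k y)

end Juxt

noncomputable def juxtEquiv (k l : ℕ) :
    NoncrossingMatching k × NoncrossingMatching l ≃
      {f : NoncrossingMatching (k + l) // SplitsAt f.1 k} :=
  Equiv.ofBijective
    (fun p => ⟨⟨juxt p.1.1 p.2.1, p.1.2.1.juxt p.2.2.1, not_hasCrossing_juxt p.1.2.2 p.2.2.2⟩,
      splitsAt_juxt⟩)
    ⟨fun p q h => by
      obtain ⟨h1, h2⟩ := juxt_inj.1 (congrArg (fun f => f.1.1) h)
      exact Prod.ext (Subtype.ext h1) (Subtype.ext h2),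
    fun ⟨⟨f, hf, hnc⟩, hsplit⟩ => by
      obtain ⟨σ, τ, hσ, hτ, rfl⟩ := exists_juxt_eq hf hsplit
      refine ⟨(⟨σ, hf.of_semiconj (Fin.castAdd_injective k l) hσ, fun h => hnc ?_⟩,
        ⟨τ, hf.of_semiconj (Fin.natAdd_injective l k) hτ, fun h => hnc ?_⟩), rfl⟩
      exacts [h.of_semiconj (Fin.strictMono_castAdd l) hσ,
        h.of_semiconj (Fin.strictMono_natAdd k) hτ]⟩

lemma card_splitsAt {k N : ℕ} (hk : k ≤ N) :
    Nat.card {f : NoncrossingMatching N // SplitsAt f.1 k} =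
      Nat.card (NoncrossingMatching k) * Nat.card (NoncrossingMatching (N - k)) := by
  obtain ⟨l, rfl⟩ := Nat.exists_eq_add_of_le hk
  rw [Nat.add_sub_cancel_left, ← Nat.card_prod, Nat.card_congr (juxtEquiv k l)]

theorem card_noncrossingMatching_add_two (M : ℕ) :
    Nat.card (NoncrossingMatching (M + 2)) =
      ∑ k : Fin (M + 1),
        Nat.card (NoncrossingMatching k) * Nat.card (NoncrossingMatching (M - k)) := by
  have e : (Σ k : Fin (M + 1), {g : NoncrossingMatching M // SplitsAt g.1 k}) ≃
      NoncrossingMatching (M + 2) :=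
    (Equiv.subtypeProdEquivSigmaSubtype _).symm.trans <|
      ((insertArcEquiv M).subtypeEquiv fun p => (not_hasCrossing_insertArc_iff p.2.2.2).symm).trans
        (noncrossingMatchingEquiv (M + 1)).symm
  rw [← Nat.card_congr e, Nat.card_sigma]
  exact Finset.sum_congr rfl fun k _ => card_splitsAt (Nat.lt_succ_iff.1 k.isLt)

lemma IsMatching.even {f : Fin N → Fin N} (hf : IsMatching f) : Even N := by
  by_contra hN
  obtain ⟨a, ha⟩ := Equiv.Perm.exists_fixed_point_of_prime (p := 2) (n := 1) (σ := hf.1.toPerm)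
    (by rwa [Fintype.card_fin, ← even_iff_two_dvd]) (by ext; simp [sq, hf.1 _])
  exact hf.2 a ha

lemma card_noncrossingMatching_of_odd (hN : Odd N) : Nat.card (NoncrossingMatching N) = 0 :=
  have : IsEmpty (NoncrossingMatching N) := ⟨fun f => Nat.not_even_iff_odd.2 hN f.2.1.even⟩
  Nat.card_of_isEmpty

lemma card_noncrossingMatching_zero : Nat.card (NoncrossingMatching 0) = 1 :=
  Nat.card_eq_one_iff_unique.2 ⟨⟨fun _ _ => Subtype.ext (funext finZeroElim)⟩,
    ⟨⟨id, ⟨fun _ => rfl, finZeroElim⟩, fun ⟨a, _⟩ => a.elim0⟩⟩⟩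

lemma Finset.sum_range_two_mul_add_one_of_odd {β : Type*} [AddCommMonoid β] {F : ℕ → β}
    (hF : ∀ k, Odd k → F k = 0) (m : ℕ) :
    ∑ k ∈ range (2 * m + 1), F k = ∑ i ∈ range (m + 1), F (2 * i) := by
  induction m with
  | zero => simp
  | succ m ih =>
    rw [show 2 * (m + 1) + 1 = 2 * m + 1 + 1 + 1 by ring, sum_range_succ, sum_range_succ, ih,
      hF _ (odd_two_mul_add_one m), add_zero, sum_range_succ _ (m + 1)]
    rfl

theorem card_noncrossingMatching_two_mul (m : ℕ) :
    Nat.card (NoncrossingMatching (2 * m)) = catalan m := by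
  induction m using Nat.strong_induction_on with
  | _ m ih =>
  cases m with
  | zero => rw [catalan_zero]; exact card_noncrossingMatching_zero
  | succ m =>
    rw [mul_add_one, card_noncrossingMatching_add_two, catalan_succ,
      Fin.sum_univ_eq_sum_range (fun k => Nat.card (NoncrossingMatching k) *
        Nat.card (NoncrossingMatching (2 * m - k))),
      Finset.sum_range_two_mul_add_one_of_odd
        (fun k hk => by rw [card_noncrossingMatching_of_odd hk, zero_mul]),
      ← Fin.sum_univ_eq_sum_range (fun i => Nat.card (NoncrossingMatching (2 * i)) *
        Nat.card (NoncrossingMatching (2 * m - 2 * i)))]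
    refine Finset.sum_congr rfl fun i _ => ?_
    rw [← Nat.mul_sub, ih i (by omega), ih (m - i) (by omega)]

lemma two_mul_add_three_mul_catalan (m : ℕ) :
    (2 * m + 3) * catalan (m + 1) = catalan (m + 2) + (2 * m + 3).choose m := by
  have h1 := succ_mul_catalan_eq_centralBinom (m + 1)
  have h2 := succ_mul_catalan_eq_centralBinom (m + 2)
  have h3 := Nat.succ_mul_centralBinom_succ (m + 1)
  have h4 := Nat.add_one_mul_choose_eq (2 * m + 2) (m + 1)
  have h5 := Nat.choose_succ_right_eq (2 * m + 3) m
  have h6 : (2 * m + 3).choose (m + 2) = (2 * m + 3).choose (m + 1) :=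
    Nat.choose_symm_of_eq_add (by ring)
  rw [h6, show (2 * m + 2).choose (m + 1) = Nat.centralBinom (m + 1) from rfl] at h4
  rw [show 2 * m + 3 - m = m + 3 by omega] at h5
  refine Nat.eq_of_mul_eq_mul_left (show 0 < (m + 2) * (m + 3) by positivity) ?_
  zify at h1 h2 h3 h4 h5 ⊢
  linear_combination ((m + 3 : ℤ) * (2 * m + 3)) * h1 - (m + 2 : ℤ) * h2 - h3
    + (m + 1 : ℤ) * h4 + (m + 2 : ℤ) * h5

theorem mu_1212_closed_form (n : ℕ) (hn : 2 ≤ n) :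
    Nat.card {f : Fin (2 * n) → Fin (2 * n) // IsMatching f ∧ MinContains p1212 f} =
      Nat.choose (2 * n - 1) (n - 2) := by
  obtain ⟨m, rfl⟩ : ∃ m, n = m + 2 := ⟨n - 2, by omega⟩
  have h := card_minContains_add_card_noncrossingMatching (2 * (m + 1))
  rw [show 2 * (m + 1) + 2 = 2 * (m + 2) by ring, card_noncrossingMatching_two_mul,
    card_noncrossingMatching_two_mul, show 2 * (m + 1) + 1 = 2 * m + 3 by ring,
    two_mul_add_three_mul_catalan] at h
  rw [show 2 * (m + 2) - 1 = 2 * m + 3 by omega, Nat.add_sub_cancel]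
  omega
end
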